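/- arXiv:0810.2924 — 3 statements merged into one kernel-verified Lean document; each statement's English description precedes it below -/
import Mathlib

section
/- For every real x ≥ 0, Q(x) = (1/π) ∫₀^{π/2} exp(−x²/(2 sin²θ)) dθ, where Q(x) = (1/√(2π)) ∫ₓ^∞ e^{−t²/2} dt is the Gaussian tail function. -/
/-!
Since `∫₀ˣ (s / cos²φ) exp (-s² / (2 cos²φ)) ds = 1 - exp (-x² / (2 cos²φ))`, Fubini turns
`∫₀^{π/2} (1 - exp (-x² / (2 cos²φ))) dφ` into
`∫₀ˣ ∫₀^{π/2} (s / cos²φ) exp (-s² / (2 cos²φ)) dφ ds`. For `s > 0` the substitution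
`t = tan φ`, with `1 / cos²φ = 1 + t²`, makes the inner integral
`s e^{-s²/2} ∫₀^∞ e^{-s²t²/2} dt = √(2π)/2 · e^{-s²/2}`. What remains is the Gaussian tail
`√(2π)/2 - ∫₀ˣ e^{-s²/2} ds`, and the reflection `φ ↦ π/2 - φ` exchanges `cos` and `sin`.
-/

open MeasureTheory Real Set

theorem integral_Ioi_zero_eq_integral_comp_tan {E : Type*} [NormedAddCommGroup E]
    [NormedSpace ℝ E] (f : ℝ → E) :
    ∫ t in Ioi 0, f t = ∫ φ in Ioo 0 (π / 2), (cos φ ^ 2)⁻¹ • f (tan φ) := by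
  have hcos : ∀ φ ∈ Ioo 0 (π / 2), cos φ ≠ 0 := fun φ hφ =>
    (cos_pos_of_mem_Ioo ⟨by linarith [hφ.1, pi_pos], hφ.2⟩).ne'
  have himage : tan '' Ioo 0 (π / 2) = Ioi 0 := by
    refine Subset.antisymm ?_ fun t ht => ?_
    · rintro _ ⟨φ, hφ, rfl⟩
      exact tan_pos_of_pos_of_lt_pi_div_two hφ.1 hφ.2
    · refine ⟨arctan t, ⟨?_, arctan_lt_pi_div_two t⟩, tan_arctan t⟩
      rw [← arctan_zero]
      exact arctan_strictMono ht
  rw [← himage, integral_image_eq_integral_abs_deriv_smul measurableSet_Ioo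
    (fun φ hφ => (hasDerivAt_tan (hcos φ hφ)).hasDerivWithinAt)
    (strictMonoOn_tan.mono fun φ hφ => ⟨by linarith [hφ.1, pi_pos], hφ.2⟩).injOn]
  refine setIntegral_congr_fun measurableSet_Ioo fun φ _ => ?_
  simp

theorem integral_div_mul_exp_neg_sq_div (k x : ℝ) :
    ∫ s in 0..x, s / k * exp (-s ^ 2 / (2 * k)) = 1 - exp (-x ^ 2 / (2 * k)) := by
  have hderiv : ∀ s, HasDerivAt (fun s => -exp (-s ^ 2 / (2 * k)))
      (s / k * exp (-s ^ 2 / (2 * k))) s := fun s => by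
    refine (((hasDerivAt_pow 2 s).neg.div_const (2 * k)).exp).neg.congr_deriv ?_
    simp only [Pi.neg_apply, Nat.cast_ofNat, pow_one, Nat.add_one_sub_one]
    ring
  rw [intervalIntegral.integral_eq_sub_of_hasDerivAt (fun s _ => hderiv s)
    ((by fun_prop : Continuous fun s => s / k * exp (-s ^ 2 / (2 * k))).intervalIntegrable _ _)]
  rw [zero_pow two_ne_zero, neg_zero, zero_div, exp_zero]
  ring

theorem integrable_exp_neg_sq_div_two : Integrable fun t : ℝ => exp (-t ^ 2 / 2) := by
  simpa [neg_div, div_eq_inv_mul] using integrable_exp_neg_mul_sq (b := 1 / 2) (by norm_num)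

theorem integral_Ioi_zero_exp_neg_sq_div_two :
    ∫ t in Ioi 0, exp (-t ^ 2 / 2) = √(2 * π) / 2 := by
  simpa [neg_div, div_eq_inv_mul] using integral_gaussian_Ioi (1 / 2)

theorem integral_Ioi_exp_neg_sq_div_two (x : ℝ) :
    ∫ t in Ioi x, exp (-t ^ 2 / 2) = √(2 * π) / 2 - ∫ t in 0..x, exp (-t ^ 2 / 2) := by
  rw [← integral_Ioi_zero_exp_neg_sq_div_two]
  exact eq_sub_of_add_eq' (intervalIntegral.integral_interval_add_Ioi
    integrable_exp_neg_sq_div_two.integrableOn integrable_exp_neg_sq_div_two.integrableOn)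

theorem intervalIntegral_comp_sin_eq_comp_cos {E : Type*} [NormedAddCommGroup E]
    [NormedSpace ℝ E] (f : ℝ → E) :
    ∫ θ in 0..π / 2, f (sin θ) = ∫ θ in 0..π / 2, f (cos θ) := by
  simpa [← sin_pi_div_two_sub] using (intervalIntegral.integral_comp_sub_left
    (a := 0) (b := π / 2) (fun θ => f (sin θ)) (π / 2)).symm

theorem integral_Ioo_div_cos_sq_mul_exp {s : ℝ} (hs : 0 < s) :
    ∫ φ in Ioo 0 (π / 2), s / cos φ ^ 2 * exp (-s ^ 2 / (2 * cos φ ^ 2)) =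
      √(2 * π) / 2 * exp (-s ^ 2 / 2) := by
  have hgauss : ∫ t in Ioi 0, s * exp (-s ^ 2 / 2) * exp (-(s ^ 2 / 2) * t ^ 2) =
      √(2 * π) / 2 * exp (-s ^ 2 / 2) := by
    have hsqrt : √(π / (s ^ 2 / 2)) = √(2 * π) / s := by
      rw [div_div_eq_mul_div, mul_comm, sqrt_div (by positivity), sqrt_sq hs.le]
    rw [integral_const_mul, integral_gaussian_Ioi, hsqrt]
    field_simp
  rw [← hgauss, integral_Ioi_zero_eq_integral_comp_tan]
  refine setIntegral_congr_fun measurableSet_Ioo fun φ hφ => ?_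
  have hcos : cos φ ≠ 0 := (cos_pos_of_mem_Ioo ⟨by linarith [hφ.1, pi_pos], hφ.2⟩).ne'
  have hexp : -s ^ 2 / (2 * cos φ ^ 2) = -s ^ 2 / 2 + -(s ^ 2 / 2) * tan φ ^ 2 := by
    rw [← inv_one_add_tan_sq hcos]
    field_simp
    ring
  rw [hexp, exp_add, smul_eq_mul]
  ring

theorem integrableOn_exp_neg_sq_div_cos_sq (x : ℝ) {s : Set ℝ} (hs : volume s < ⊤) :
    IntegrableOn (fun φ => exp (-x ^ 2 / (2 * cos φ ^ 2))) s := by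
  have hmeas : Measurable fun φ => exp (-x ^ 2 / (2 * cos φ ^ 2)) := by fun_prop
  refine IntegrableOn.of_bound hs hmeas.aestronglyMeasurable 1 (ae_of_all _ fun φ => ?_)
  rw [norm_of_nonneg (exp_nonneg _), exp_le_one_iff]
  exact div_nonpos_of_nonpos_of_nonneg (neg_nonpos.mpr (sq_nonneg x)) (by positivity)

theorem integral_Ioo_one_sub_exp_neg_sq_div_cos_sq {x : ℝ} (hx : 0 ≤ x) :
    ∫ φ in Ioo 0 (π / 2), (1 - exp (-x ^ 2 / (2 * cos φ ^ 2))) =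
      √(2 * π) / 2 * ∫ s in 0..x, exp (-s ^ 2 / 2) := by
  set f : ℝ → ℝ → ℝ := fun φ s => s / cos φ ^ 2 * exp (-s ^ 2 / (2 * cos φ ^ 2))
  have hinner (φ : ℝ) : ∫ s in Ioc 0 x, f φ s = 1 - exp (-x ^ 2 / (2 * cos φ ^ 2)) := by
    rw [← intervalIntegral.integral_of_le hx, integral_div_mul_exp_neg_sq_div]
  have hf : Integrable (Function.uncurry f)
      ((volume.restrict (Ioo 0 (π / 2))).prod (volume.restrict (Ioc 0 x))) := by
    have hmeas : Measurable (Function.uncurry f) := by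
      unfold Function.uncurry f; fun_prop
    refine (integrable_prod_iff hmeas.aestronglyMeasurable).mpr
      ⟨ae_of_all _ fun φ => (by fun_prop : Continuous (f φ)).integrableOn_Ioc, ?_⟩
    have hnorm : ∀ φ, ∫ s in Ioc 0 x, ‖f φ s‖ = ∫ s in Ioc 0 x, f φ s := fun φ =>
      setIntegral_congr_fun measurableSet_Ioc fun s hs =>
        norm_of_nonneg (mul_nonneg (div_nonneg hs.1.le (sq_nonneg _)) (exp_nonneg _))
    simp only [Function.uncurry_apply_pair, hnorm, hinner]
    exact (integrableOn_const measure_Ioo_lt_top.ne).sub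
      (integrableOn_exp_neg_sq_div_cos_sq x measure_Ioo_lt_top)
  calc ∫ φ in Ioo 0 (π / 2), (1 - exp (-x ^ 2 / (2 * cos φ ^ 2)))
      = ∫ φ in Ioo 0 (π / 2), ∫ s in Ioc 0 x, f φ s := by simp only [hinner]
    _ = ∫ s in Ioc 0 x, ∫ φ in Ioo 0 (π / 2), f φ s := integral_integral_swap hf
    _ = ∫ s in Ioc 0 x, √(2 * π) / 2 * exp (-s ^ 2 / 2) :=
      setIntegral_congr_fun measurableSet_Ioc fun s hs => integral_Ioo_div_cos_sq_mul_exp hs.1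
    _ = √(2 * π) / 2 * ∫ s in 0..x, exp (-s ^ 2 / 2) := by
      rw [integral_const_mul, intervalIntegral.integral_of_le hx]

theorem intervalIntegral_exp_neg_sq_div_cos_sq {x : ℝ} (hx : 0 ≤ x) :
    ∫ φ in 0..π / 2, exp (-x ^ 2 / (2 * cos φ ^ 2)) =
      √(2 * π) / 2 * ∫ t in Ioi x, exp (-t ^ 2 / 2) := by
  have hsub := integral_sub (integrableOn_const measure_Ioo_lt_top.ne (C := (1 : ℝ)))
    (integrableOn_exp_neg_sq_div_cos_sq x (measure_Ioo_lt_top (a := 0) (b := π / 2)))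
  rw [integral_Ioo_one_sub_exp_neg_sq_div_cos_sq hx, setIntegral_const,
    volume_real_Ioo_of_le (by positivity), smul_eq_mul, mul_one, sub_zero] at hsub
  rw [intervalIntegral.integral_of_le (by positivity), integral_Ioc_eq_integral_Ioo,
    integral_Ioi_exp_neg_sq_div_two]
  linear_combination hsub - sq_sqrt (by positivity : (0 : ℝ) ≤ 2 * π) / 4

/-- Craig's formula: for `x ≥ 0`, the Gaussian tail function
`Q(x) = (1/√(2π)) ∫ₓ^∞ e^{−t²/2} dt` satisfies
`Q(x) = (1/π) ∫₀^{π/2} exp(−x²/(2 sin²θ)) dθ`. -/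
theorem craig_formula_Q_function (x : ℝ) (hx : 0 ≤ x) :
    (1 / Real.sqrt (2 * Real.pi)) * ∫ t in Set.Ioi x, Real.exp (-t ^ 2 / 2) =
      (1 / Real.pi) * ∫ θ in (0 : ℝ)..(Real.pi / 2),
        Real.exp (-x ^ 2 / (2 * Real.sin θ ^ 2)) := by
  rw [intervalIntegral_comp_sin_eq_comp_cos (fun y => exp (-x ^ 2 / (2 * y ^ 2))),
    intervalIntegral_exp_neg_sq_div_cos_sq hx]
  have hsqrt : √(2 * π) ^ 2 = 2 * π := sq_sqrt (by positivity)
  field_simp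
  rw [hsqrt]
end

section
/- Fix t > 0, an N×N nonnegative diagonal matrix D with D ≠ 0 and a K×K nonnegative diagonal matrix D̃ with D̃ ≠ 0. Then the system δ = (1/K) Tr[D (I + t δ̃ D)⁻¹], δ̃ = (1/K) Tr[D̃ (I + t δ D̃)⁻¹] admits a unique solution (δ, δ̃) with δ > 0 and δ̃ > 0. -/
/-!
Write `F δ̃` and `G δ` for the two right-hand sides. Both are positive and decreasing on `[0, ∞)`,
so `x - F (G x)` is `≤ 0` at `0` and `≥ 0` at `F 0`, and the intermediate value theorem gives a
solution. For uniqueness, note that `x * G x` is strictly increasing and `y * F y` increasing,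
and that both equal `δ δ̃` at a solution: if `δ < δ'` then `δ̃ ≥ δ̃'` because `G` decreases, hence
`δ δ̃ < δ' δ̃'` by the first monotonicity and `δ δ̃ ≥ δ' δ̃'` by the second.
-/

open Set Function

theorem strictMonoOn_div_one_add_mul {t : ℝ} (ht : 0 ≤ t) :
    StrictMonoOn (fun u : ℝ => u / (1 + t * u)) (Ici 0) := by
  intro u (hu : 0 ≤ u) v (hv : 0 ≤ v) huv
  rw [div_lt_div_iff₀ (by positivity) (by positivity)]
  linear_combination huv

theorem exists_pos_of_nonneg_of_ne_zero {ι : Type*} {c : ι → ℝ} (hc : ∀ i, 0 ≤ c i)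
    (hc0 : c ≠ 0) : ∃ i, 0 < c i :=
  (Pi.lt_def.1 (lt_of_le_of_ne hc hc0.symm)).2

section ResolventTrace

variable {ι : Type*} [Fintype ι] {s t : ℝ} {c : ι → ℝ}

/-- `s * Tr[diag c * (I + t x diag c)⁻¹]`. -/
noncomputable def resolventTrace (s t : ℝ) (c : ι → ℝ) (x : ℝ) : ℝ :=
  s * ∑ i, c i / (1 + t * x * c i)

theorem resolventTrace_continuousOn (ht : 0 ≤ t) (hc : ∀ i, 0 ≤ c i) :
    ContinuousOn (resolventTrace s t c) (Ici 0) := by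
  refine continuousOn_const.mul (continuousOn_finsetSum _ fun i _ => ?_)
  refine continuousOn_const.div (by fun_prop) fun x (hx : 0 ≤ x) => ?_
  have := hc i
  positivity

theorem resolventTrace_antitoneOn (hs : 0 ≤ s) (ht : 0 ≤ t) (hc : ∀ i, 0 ≤ c i) :
    AntitoneOn (resolventTrace s t c) (Ici 0) := by
  intro x (hx : 0 ≤ x) y _ hxy
  refine mul_le_mul_of_nonneg_left (Finset.sum_le_sum fun i _ => ?_) hs
  have := hc i
  exact div_le_div_of_nonneg_left (hc i) (by positivity) (by gcongr)

theorem resolventTrace_pos (hs : 0 < s) (ht : 0 ≤ t) (hc : ∀ i, 0 ≤ c i) (hc0 : c ≠ 0)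
    {x : ℝ} (hx : 0 ≤ x) : 0 < resolventTrace s t c x := by
  obtain ⟨i₀, hi₀⟩ := exists_pos_of_nonneg_of_ne_zero hc hc0
  refine mul_pos hs (Finset.sum_pos' (fun i _ => ?_) ⟨i₀, Finset.mem_univ _, ?_⟩)
  · have := hc i
    positivity
  · have := hi₀.le
    exact div_pos hi₀ (by positivity)

theorem strictMonoOn_mul_resolventTrace (hs : 0 < s) (ht : 0 ≤ t) (hc : ∀ i, 0 ≤ c i)
    (hc0 : c ≠ 0) : StrictMonoOn (fun x => x * resolventTrace s t c x) (Ici 0) := by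
  obtain ⟨i₀, hi₀⟩ := exists_pos_of_nonneg_of_ne_zero hc hc0
  have hmul : ∀ x, x * resolventTrace s t c x = s * ∑ i, c i * x / (1 + t * (c i * x)) := by
    intro x
    rw [resolventTrace, mul_left_comm, Finset.mul_sum]
    congr 1
    exact Finset.sum_congr rfl fun i _ => by ring
  have hmem : ∀ i {x : ℝ}, 0 ≤ x → c i * x ∈ Ici 0 := fun i x hx => mul_nonneg (hc i) hx
  intro x (hx : 0 ≤ x) y (hy : 0 ≤ y) hxy
  simp only [hmul]
  refine mul_lt_mul_of_pos_left
    (Finset.sum_lt_sum (fun i _ => ?_) ⟨i₀, Finset.mem_univ _, ?_⟩) hs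
  · exact (strictMonoOn_div_one_add_mul ht).monotoneOn (hmem i hx) (hmem i hy)
      (mul_le_mul_of_nonneg_left hxy.le (hc i))
  · exact strictMonoOn_div_one_add_mul ht (hmem i₀ hx) (hmem i₀ hy)
      (mul_lt_mul_of_pos_left hxy hi₀)

end ResolventTrace

section CoupledSolution

variable {F G : ℝ → ℝ}

theorem exists_pos_isFixedPt_comp (hFc : ContinuousOn F (Ici 0)) (hGc : ContinuousOn G (Ici 0))
    (hF : MapsTo F (Ici 0) (Ioi 0)) (hG : MapsTo G (Ici 0) (Ioi 0))
    (hFa : AntitoneOn F (Ici 0)) :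
    ∃ a, 0 < a ∧ IsFixedPt (F ∘ G) a := by
  have hG' : MapsTo G (Ici 0) (Ici 0) := hG.mono_right Ioi_subset_Ici_self
  have hM : 0 ≤ F 0 := le_of_lt (hF self_mem_Ici)
  have hcont : ContinuousOn (fun x => x - F (G x)) (Icc 0 (F 0)) :=
    (continuousOn_id.sub (hFc.comp hGc hG')).mono Icc_subset_Ici_self
  have hFG_le : F (G (F 0)) ≤ F 0 := hFa self_mem_Ici (hG' hM) (hG' hM)
  obtain ⟨a, ⟨ha0, -⟩, ha⟩ := intermediate_value_Icc hM hcont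
    ⟨by simpa using (mem_Ioi.1 (hF (hG' self_mem_Ici))).le, sub_nonneg.2 hFG_le⟩
  have hfix : F (G a) = a := by linarith [show a - F (G a) = 0 from ha]
  exact ⟨a, hfix ▸ hF (hG' ha0), hfix⟩

theorem not_lt_of_coupled_solutions (hGa : AntitoneOn G (Ici 0))
    (hF : MonotoneOn (fun y => y * F y) (Ici 0)) (hG : StrictMonoOn (fun x => x * G x) (Ici 0))
    {a b a' b' : ℝ} (ha : 0 ≤ a) (hb : 0 ≤ b) (ha' : 0 ≤ a') (hb' : 0 ≤ b')
    (hab : a = F b) (hba : b = G a) (hab' : a' = F b') (hba' : b' = G a') : ¬ a < a' := by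
  intro hlt
  have hb'b : b' ≤ b := hba ▸ hba' ▸ hGa ha ha' hlt.le
  have hlt' : a * b < a' * b' := by
    have : a * G a < a' * G a' := hG ha ha' hlt
    rwa [← hba, ← hba'] at this
  have hle' : b' * a' ≤ b * a := by
    have : b' * F b' ≤ b * F b := hF hb' hb hb'b
    rwa [← hab, ← hab'] at this
  linarith

theorem existsUnique_pos_coupled_solution (hFc : ContinuousOn F (Ici 0))
    (hGc : ContinuousOn G (Ici 0)) (hF : MapsTo F (Ici 0) (Ioi 0)) (hG : MapsTo G (Ici 0) (Ioi 0))
    (hFa : AntitoneOn F (Ici 0)) (hGa : AntitoneOn G (Ici 0))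
    (hFm : MonotoneOn (fun y => y * F y) (Ici 0)) (hGm : StrictMonoOn (fun x => x * G x) (Ici 0)) :
    ∃! p : ℝ × ℝ, 0 < p.1 ∧ 0 < p.2 ∧ p.1 = F p.2 ∧ p.2 = G p.1 := by
  obtain ⟨a, ha, hfix⟩ := exists_pos_isFixedPt_comp hFc hGc hF hG hFa
  refine ⟨(a, G a), ⟨ha, hG ha.le, hfix.symm, rfl⟩, ?_⟩
  rintro ⟨a', b'⟩ ⟨ha', hb', hab', hba'⟩
  have hb : 0 ≤ G a := le_of_lt (hG ha.le)
  have heq : a' = a := le_antisymm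
    (not_lt.1 <| not_lt_of_coupled_solutions hGa hFm hGm ha.le hb ha'.le hb'.le
      hfix.symm rfl hab' hba')
    (not_lt.1 <| not_lt_of_coupled_solutions hGa hFm hGm ha'.le hb'.le ha.le hb
      hab' hba' hfix.symm rfl)
  simp only [Prod.mk.injEq]
  exact ⟨heq, heq ▸ hba'⟩

end CoupledSolution

/-- Existence and uniqueness of the solution of the canonical fixed-point system:
for `t > 0`, nonnegative diagonal matrices `D = diag(d)` (`N×N`) and `D̃ = diag(d̃)`
(`K×K`), not identically zero, the system
`δ = (1/K) Tr[D (I + t δ̃ D)⁻¹]`, `δ̃ = (1/K) Tr[D̃ (I + t δ D̃)⁻¹]`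
has a unique solution with `δ > 0`, `δ̃ > 0`. -/
theorem fixed_point_system_unique_solution (N K : ℕ) (hK : 0 < K) (t : ℝ) (ht : 0 < t)
    (d : Fin N → ℝ) (dt : Fin K → ℝ) (hd : ∀ i, 0 ≤ d i) (hdt : ∀ j, 0 ≤ dt j)
    (hd0 : d ≠ 0) (hdt0 : dt ≠ 0) :
    ∃! p : ℝ × ℝ, 0 < p.1 ∧ 0 < p.2 ∧
      p.1 = (1 / (K : ℝ)) * ∑ i, d i / (1 + t * p.2 * d i) ∧
      p.2 = (1 / (K : ℝ)) * ∑ j, dt j / (1 + t * p.1 * dt j) := by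
  have hs : (0 : ℝ) < 1 / K := one_div_pos.2 (Nat.cast_pos.2 hK)
  exact existsUnique_pos_coupled_solution
    (resolventTrace_continuousOn ht.le hd) (resolventTrace_continuousOn ht.le hdt)
    (fun _ hx => resolventTrace_pos hs ht.le hd hd0 hx)
    (fun _ hx => resolventTrace_pos hs ht.le hdt hdt0 hx)
    (resolventTrace_antitoneOn hs.le ht.le hd) (resolventTrace_antitoneOn hs.le ht.le hdt)
    (strictMonoOn_mul_resolventTrace hs ht.le hd hd0).monotoneOn
    (strictMonoOn_mul_resolventTrace hs ht.le hdt hdt0)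
end

section
/- With t > 0 and δ, δ̃ > 0 the unique solution of the fixed-point system above, define γ = (1/K) Tr[D²(I + tδ̃D)⁻²] and γ̃ = (1/K) Tr[D̃²(I + tδD̃)⁻²]. Then t²γγ̃ < 1. -/
/-!
Write `c = tδ̃`. Termwise, `x/(1 + cx) - c·x²/(1 + cx)² = x/(1 + cx)² ≥ 0`, with equality only at
`x = 0`; since `δ > 0` forces some `dᵢ > 0`, summing gives `tδ̃γ < δ`, and symmetrically
`tδγ̃ < δ̃`. Multiplying the two and cancelling `δδ̃` gives `t²γγ̃ < 1`.
-/

section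

variable {c x : ℝ}

lemma div_one_add_mul_sub_mul_sq_div (hc : 0 ≤ c) (hx : 0 ≤ x) :
    x / (1 + c * x) - c * (x ^ 2 / (1 + c * x) ^ 2) = x / (1 + c * x) ^ 2 := by
  have : 1 + c * x ≠ 0 := by positivity
  field_simp
  ring

lemma mul_sq_div_one_add_mul_sq_le (hc : 0 ≤ c) (hx : 0 ≤ x) :
    c * (x ^ 2 / (1 + c * x) ^ 2) ≤ x / (1 + c * x) := by
  have := div_one_add_mul_sub_mul_sq_div hc hx
  have : 0 ≤ x / (1 + c * x) ^ 2 := by positivity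
  linarith

lemma mul_sq_div_one_add_mul_sq_lt (hc : 0 ≤ c) (hx : 0 < x) :
    c * (x ^ 2 / (1 + c * x) ^ 2) < x / (1 + c * x) := by
  have := div_one_add_mul_sub_mul_sq_div hc hx.le
  have : 0 < x / (1 + c * x) ^ 2 := by positivity
  linarith

end

section

variable {ι : Type*} [Fintype ι] {c w : ℝ} {x : ι → ℝ}

lemma mul_sum_sq_div_one_add_mul_sq_lt (hc : 0 ≤ c) (hx : ∀ i, 0 ≤ x i)
    (h : 0 < ∑ i, x i / (1 + c * x i)) :
    c * ∑ i, x i ^ 2 / (1 + c * x i) ^ 2 < ∑ i, x i / (1 + c * x i) := by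
  obtain ⟨i, -, hi⟩ := Finset.exists_lt_of_sum_lt (f := fun _ => (0 : ℝ)) (by simpa using h)
  have hxi : 0 < x i := by
    have : 0 < 1 + c * x i := by linarith [mul_nonneg hc (hx i)]
    exact (div_pos_iff_of_pos_right this).1 hi
  rw [Finset.mul_sum]
  exact Finset.sum_lt_sum (fun j _ => mul_sq_div_one_add_mul_sq_le hc (hx j))
    ⟨i, Finset.mem_univ i, mul_sq_div_one_add_mul_sq_lt hc hxi⟩

lemma mul_weighted_sum_sq_div_one_add_mul_sq_lt (hw : 0 ≤ w) (hc : 0 ≤ c) (hx : ∀ i, 0 ≤ x i)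
    (h : 0 < w * ∑ i, x i / (1 + c * x i)) :
    c * (w * ∑ i, x i ^ 2 / (1 + c * x i) ^ 2) < w * ∑ i, x i / (1 + c * x i) := by
  have hw' : 0 < w := hw.lt_of_ne (by rintro rfl; simp at h)
  rw [mul_left_comm]
  exact mul_lt_mul_of_pos_left
    (mul_sum_sq_div_one_add_mul_sq_lt hc hx (pos_of_mul_pos_right h hw)) hw'

end

theorem t_sq_gamma_gammat_lt_one_general (N K : ℕ) (t : ℝ) (ht : 0 < t)
    (d : Fin N → ℝ) (dt : Fin K → ℝ) (hd : ∀ i, 0 ≤ d i) (hdt : ∀ j, 0 ≤ dt j)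
    (δ δt : ℝ) (hδ : 0 < δ) (hδt : 0 < δt)
    (heq1 : δ = (1 / (K : ℝ)) * ∑ i, d i / (1 + t * δt * d i))
    (heq2 : δt = (1 / (K : ℝ)) * ∑ j, dt j / (1 + t * δ * dt j)) :
    t ^ 2 * ((1 / (K : ℝ)) * ∑ i, d i ^ 2 / (1 + t * δt * d i) ^ 2) *
        ((1 / (K : ℝ)) * ∑ j, dt j ^ 2 / (1 + t * δ * dt j) ^ 2) < 1 := by
  set γ := (1 / (K : ℝ)) * ∑ i, d i ^ 2 / (1 + t * δt * d i) ^ 2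
  set γt := (1 / (K : ℝ)) * ∑ j, dt j ^ 2 / (1 + t * δ * dt j) ^ 2
  have hw : (0 : ℝ) ≤ 1 / K := by positivity
  have h1 : t * δt * γ < δ := by
    rw [heq1] at hδ ⊢
    exact mul_weighted_sum_sq_div_one_add_mul_sq_lt hw (by positivity) hd hδ
  have h2 : t * δ * γt < δt := by
    rw [heq2] at hδt ⊢
    exact mul_weighted_sum_sq_div_one_add_mul_sq_lt hw (by positivity) hdt hδt
  have hprod : t * δt * γ * (t * δ * γt) < δ * δt :=
    mul_lt_mul'' h1 h2 (by positivity) (by positivity)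
  refine lt_of_mul_lt_mul_right (a := δ * δt) ?_ (by positivity)
  linarith

/-- With `t > 0` and `(δ, δ̃)` the positive solution of the fixed-point system
`δ = (1/K)Tr[D(I + tδ̃D)⁻¹]`, `δ̃ = (1/K)Tr[D̃(I + tδD̃)⁻¹]`, let
`γ = (1/K)Tr[D²(I + tδ̃D)⁻²]` and `γ̃ = (1/K)Tr[D̃²(I + tδD̃)⁻²]`. Then `t²γγ̃ < 1`. -/
theorem t_sq_gamma_gammat_lt_one (N K : ℕ) (hK : 0 < K) (t : ℝ) (ht : 0 < t)
    (d : Fin N → ℝ) (dt : Fin K → ℝ) (hd : ∀ i, 0 ≤ d i) (hdt : ∀ j, 0 ≤ dt j)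
    (hd0 : d ≠ 0) (hdt0 : dt ≠ 0)
    (δ δt : ℝ) (hδ : 0 < δ) (hδt : 0 < δt)
    (heq1 : δ = (1 / (K : ℝ)) * ∑ i, d i / (1 + t * δt * d i))
    (heq2 : δt = (1 / (K : ℝ)) * ∑ j, dt j / (1 + t * δ * dt j)) :
    t ^ 2 * ((1 / (K : ℝ)) * ∑ i, d i ^ 2 / (1 + t * δt * d i) ^ 2) *
        ((1 / (K : ℝ)) * ∑ j, dt j ^ 2 / (1 + t * δ * dt j) ^ 2) < 1 :=
  t_sq_gamma_gammat_lt_one_general N K t ht d dt hd hdt δ δt hδ hδt heq1 heq2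
end
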